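/- Let μ be a probability measure on a set partitioned into N measurable cells C_1,...,C_N with μ(C_i) > 0. For i.i.d. queries q_1,...,q_t ~ μ, let n_i(t) be the number of queries landing in C_i. If for each i, conditionally on n_i(t) = n, a quantity satisfies E[μ(C_i \ Ĉ_{i,t}) | n_i(t) = n] ≤ (2/(n+1))·μ(C_i), then ∑_{t=1}^T ∑_{i=1}^N E[μ(C_i \ Ĉ_{i,t})] ≤ 2N·log(T+1). -/

import Mathlib

/-!
The count `n_i(t)` is binomial with parameters `t` and `p = μ(C_i)`: the event `n_i(t) = n` is the
disjoint union, over the `n`-sets `S` of earlier query times, of the boxes "query `s` lies in `C_i`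
exactly when `s ∈ S`", each of product measure `p^n (1 - p)^(t - n)`. For `K ~ Bin(t, p)`
the identity `(t + 1) * C(t, n) = (n + 1) * C(t + 1, n + 1)` gives
`E[p / (K + 1)] = (1 - (1 - p)^(t + 1)) / (t + 1) ≤ 1 / (t + 1)`.
Hence every term of the double sum is at most `2 / (t + 1)`, and
`∑_{t=1}^T 1 / (t + 1) = H_{T+1} - 1 ≤ log (T + 1)`.
-/

open MeasureTheory Finset
open scoped ENNReal

namespace ENNReal

theorem sum_div_add_one_mul_binomial_le {p q : ℝ≥0∞} (hpq : p + q = 1) (t : ℕ) :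
    ∑ n ∈ range (t + 1), p / (n + 1) * (t.choose n * p ^ n * q ^ (t - n)) ≤
      ((t : ℝ≥0∞) + 1)⁻¹ := by
  have hterm : ∀ n ∈ range (t + 1), p / (n + 1) * (t.choose n * p ^ n * q ^ (t - n)) =
      ((t : ℝ≥0∞) + 1)⁻¹ * (p ^ (n + 1) * q ^ (t + 1 - (n + 1)) * (t + 1).choose (n + 1)) := by
    intro n _
    have hc : ((t : ℝ≥0∞) + 1) * t.choose n = (t + 1).choose (n + 1) * ((n : ℝ≥0∞) + 1) := by
      exact_mod_cast Nat.add_one_mul_choose_eq t n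
    rw [← ENNReal.div_eq_inv_mul, eq_div_iff (by simp) (by simp)]
    calc ((t : ℝ≥0∞) + 1) * (p / (n + 1) * (t.choose n * p ^ n * q ^ (t - n)))
        = ((t + 1) * t.choose n) * ((n : ℝ≥0∞) + 1)⁻¹ * (p ^ (n + 1) * q ^ (t - n)) := by
          rw [div_eq_mul_inv]; ring
      _ = ((n : ℝ≥0∞) + 1) * ((n : ℝ≥0∞) + 1)⁻¹ *
            (p ^ (n + 1) * q ^ (t - n) * (t + 1).choose (n + 1)) := by
          rw [hc]; ring
      _ = _ := by
          rw [ENNReal.mul_inv_cancel (by simp) (by simp), one_mul, Nat.add_sub_add_right]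
  rw [sum_congr rfl hterm, ← mul_sum]
  calc ((t : ℝ≥0∞) + 1)⁻¹ *
        ∑ n ∈ range (t + 1), p ^ (n + 1) * q ^ (t + 1 - (n + 1)) * (t + 1).choose (n + 1)
      ≤ ((t : ℝ≥0∞) + 1)⁻¹ * (p + q) ^ (t + 1) := by
        rw [add_pow, sum_range_succ' _ (t + 1)]
        gcongr
        exact le_self_add
    _ = ((t : ℝ≥0∞) + 1)⁻¹ := by rw [hpq, one_pow, mul_one]

theorem two_div_natCast_add_one_eq_ofReal (t : ℕ) :
    (2 : ℝ≥0∞) / (t + 1) = ENNReal.ofReal (2 * ((t : ℝ) + 1)⁻¹) := by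
  rw [ENNReal.ofReal_mul zero_le_two, ofReal_inv_of_pos (by positivity),
    ENNReal.ofReal_add (by positivity) zero_le_one]
  simp [div_eq_mul_inv]

end ENNReal

theorem sum_Icc_inv_add_one_le_log (T : ℕ) :
    ∑ t ∈ Icc 1 T, ((t : ℝ) + 1)⁻¹ ≤ Real.log (T + 1) := by
  have h : (harmonic (T + 1) : ℝ) = 1 + ∑ t ∈ Icc 1 T, ((t : ℝ) + 1)⁻¹ := by
    rw [harmonic, sum_range_succ', ← Ico_add_one_right_eq_Icc, sum_Ico_eq_sum_range]
    push_cast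
    ring_nf
  have := harmonic_le_one_add_log (T + 1)
  push_cast at this
  linarith

section Fibers

variable {Ω : Type*} [MeasurableSpace Ω] {P : Measure Ω} {K : Ω → ℕ}

theorem lintegral_eq_tsum_setLIntegral_fiber (hK : Measurable K) (Y : Ω → ℝ≥0∞) :
    ∫⁻ ω, Y ω ∂P = ∑' n, ∫⁻ ω in {ω | K ω = n}, Y ω ∂P := by
  rw [← lintegral_iUnion (s := fun n => {ω | K ω = n}) (fun n => hK (measurableSet_singleton n)),
    ← setLIntegral_univ]
  · congr
    ext ω
    simp
  · intro m n hmn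
    exact Disjoint.preimage K (Set.disjoint_singleton.2 hmn)

theorem lintegral_le_of_binomial {t : ℕ} {p q c : ℝ≥0∞} (hpq : p + q = 1) (hK : Measurable K)
    (hlaw : ∀ n, P {ω | K ω = n} = t.choose n * p ^ n * q ^ (t - n)) {Y : Ω → ℝ≥0∞}
    (hY : ∀ n, ∫⁻ ω in {ω | K ω = n}, Y ω ∂P ≤ c / (n + 1) * p * P {ω | K ω = n}) :
    ∫⁻ ω, Y ω ∂P ≤ c / (t + 1) := by
  have hvanish : ∀ n ∉ range (t + 1), c / (n + 1) * p * P {ω | K ω = n} = 0 := by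
    intro n hn
    rw [hlaw, Nat.choose_eq_zero_of_lt (by simpa using hn)]
    simp
  calc ∫⁻ ω, Y ω ∂P ≤ ∑' n, c / (n + 1) * p * P {ω | K ω = n} := by
        rw [lintegral_eq_tsum_setLIntegral_fiber hK]
        exact ENNReal.tsum_le_tsum hY
    _ = c * ∑ n ∈ range (t + 1), p / (n + 1) * (t.choose n * p ^ n * q ^ (t - n)) := by
        rw [tsum_eq_sum hvanish, mul_sum]
        refine sum_congr rfl fun n _ => ?_
        rw [hlaw, ENNReal.div_eq_inv_mul, ENNReal.div_eq_inv_mul]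
        ring
    _ ≤ c / (t + 1) := by
        rw [ENNReal.div_eq_inv_mul, mul_comm _ c]
        gcongr
        exact ENNReal.sum_div_add_one_mul_binomial_le hpq t

end Fibers

section Product

variable {ι E : Type*} {C : Set E} [DecidablePred (· ∈ C)] {F S : Finset ι}

theorem setOf_filter_mem_eq_pi [DecidableEq ι] (hSF : S ⊆ F) :
    {ω : ι → E | {s ∈ F | ω s ∈ C} = S} = (F : Set ι).pi fun s => if s ∈ S then C else Cᶜ := by
  ext ω
  simp only [Set.mem_ofPred_eq, Set.mem_pi, Finset.mem_coe, Finset.ext_iff, mem_filter]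
  refine ⟨fun h s hsF => ?_, fun h s => ?_⟩
  · by_cases hs : s ∈ S <;> simpa [hs, hsF] using h s
  · by_cases hsF : s ∈ F
    · by_cases hs : s ∈ S <;> simpa [hs, hsF] using h s hsF
    · simpa [hsF] using mt (@hSF s) hsF

theorem setOf_card_filter_mem_eq_biUnion (F : Finset ι) (n : ℕ) :
    {ω : ι → E | #{s ∈ F | ω s ∈ C} = n} =
      ⋃ S ∈ F.powersetCard n, {ω | {s ∈ F | ω s ∈ C} = S} := by
  ext ω
  simp only [Set.mem_ofPred_eq, Set.mem_iUnion, mem_powersetCard]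
  exact ⟨fun h => ⟨_, ⟨filter_subset _ _, h⟩, rfl⟩, fun ⟨S, ⟨_, hS⟩, h⟩ => h ▸ hS⟩

variable [MeasurableSpace E]

theorem measurableSet_setOf_filter_mem_eq (hC : MeasurableSet C) (hSF : S ⊆ F) :
    MeasurableSet {ω : ι → E | {s ∈ F | ω s ∈ C} = S} := by
  classical
  rw [setOf_filter_mem_eq_pi hSF]
  refine MeasurableSet.pi F.countable_toSet fun s _ => ?_
  split_ifs
  exacts [hC, hC.compl]

theorem measurable_card_filter_mem (hC : MeasurableSet C) (F : Finset ι) :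
    Measurable fun ω : ι → E => #{s ∈ F | ω s ∈ C} := by
  refine measurable_to_countable' fun n => ?_
  simp only [Set.preimage, Set.mem_singleton_iff]
  rw [setOf_card_filter_mem_eq_biUnion]
  exact .biUnion (Set.to_countable _) fun S hS =>
    measurableSet_setOf_filter_mem_eq hC (mem_powersetCard.1 hS).1

variable [Fintype ι] {μ : Measure E} [IsProbabilityMeasure μ]

theorem pi_setOf_filter_mem_eq (hSF : S ⊆ F) :
    Measure.pi (fun _ : ι => μ) {ω | {s ∈ F | ω s ∈ C} = S} = μ C ^ #S * μ Cᶜ ^ (#F - #S) := by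
  classical
  rw [setOf_filter_mem_eq_pi hSF, Measure.pi_pi_finset, prod_apply_ite, prod_const, prod_const,
    filter_mem_eq_inter, inter_eq_right.2 hSF, filter_not, filter_mem_eq_inter,
    inter_eq_right.2 hSF, card_sdiff_of_subset hSF]

theorem pi_setOf_card_filter_mem_eq (hC : MeasurableSet C) (F : Finset ι) (n : ℕ) :
    Measure.pi (fun _ : ι => μ) {ω | #{s ∈ F | ω s ∈ C} = n} =
      (#F).choose n * μ C ^ n * μ Cᶜ ^ (#F - n) := by
  rw [setOf_card_filter_mem_eq_biUnion, measure_biUnion_finset]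
  · rw [sum_congr rfl fun S hS => by
      rw [pi_setOf_filter_mem_eq (mem_powersetCard.1 hS).1, (mem_powersetCard.1 hS).2],
      sum_const, card_powersetCard, nsmul_eq_mul, mul_assoc]
  · intro S _ S' _ hSS'
    exact Disjoint.preimage _ (Set.disjoint_singleton.2 hSS')
  · exact fun S hS => measurableSet_setOf_filter_mem_eq hC (mem_powersetCard.1 hS).1

end Product

theorem Fin.ncard_setOf_val_lt_and_mem {E : Type*} {C : Set E} [DecidablePred (· ∈ C)] {m : ℕ}
    (t : ℕ) (ω : Fin m → E) :
    {s : Fin m | (s : ℕ) < t ∧ ω s ∈ C}.ncard = #{s ∈ {s : Fin m | (s : ℕ) < t} | ω s ∈ C} := by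
  rw [← Set.ncard_coe_finset]
  congr 1
  ext s
  simp

theorem lintegral_le_of_ncard_val_lt_and_mem {E : Type*} [MeasurableSpace E] {μ : Measure E}
    [IsProbabilityMeasure μ] {C : Set E} (hC : MeasurableSet C) {m t : ℕ} (ht : t ≤ m)
    {c : ℝ≥0∞} {Y : (Fin m → E) → ℝ≥0∞}
    (hY : ∀ n : ℕ, ∫⁻ ω in {ω : Fin m → E | {s : Fin m | (s : ℕ) < t ∧ ω s ∈ C}.ncard = n},
        Y ω ∂Measure.pi (fun _ => μ) ≤ c / (n + 1) * μ C *
          Measure.pi (fun _ => μ) {ω : Fin m → E | {s : Fin m | (s : ℕ) < t ∧ ω s ∈ C}.ncard = n}) :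
    ∫⁻ ω, Y ω ∂Measure.pi (fun _ => μ) ≤ c / (t + 1) := by
  classical
  have hcard : #{s : Fin m | (s : ℕ) < t} = t := by
    rw [Fin.card_filter_val_lt, min_eq_right ht]
  have hK := Fin.ncard_setOf_val_lt_and_mem (C := C) (m := m) t
  exact lintegral_le_of_binomial (t := t) (prob_add_prob_compl hC)
    (by simpa only [hK] using measurable_card_filter_mem hC _)
    (fun n => by simp_rw [hK, pi_setOf_card_filter_mem_eq hC, hcard]) hY

theorem stmt_18_general {E : Type*} [MeasurableSpace E] (μ : Measure E) [IsProbabilityMeasure μ]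
    (N T : ℕ) (C : Fin N → Set E) (hCm : ∀ i, MeasurableSet (C i))
    (Y : Fin N → ℕ → (Fin (T + 1) → E) → ℝ≥0∞)
    (hcond : ∀ i : Fin N, ∀ t ∈ Finset.Icc 1 T, ∀ n : ℕ,
      ∫⁻ ω in {ω : Fin (T + 1) → E | {s : Fin (T + 1) | (s : ℕ) < t ∧ ω s ∈ C i}.ncard = n},
          Y i t ω ∂(Measure.pi fun _ : Fin (T + 1) => μ)
        ≤ (2 / ((n : ℝ≥0∞) + 1)) * μ (C i) *
            (Measure.pi fun _ : Fin (T + 1) => μ)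
              {ω : Fin (T + 1) → E | {s : Fin (T + 1) | (s : ℕ) < t ∧ ω s ∈ C i}.ncard = n}) :
    ∑ t ∈ Finset.Icc 1 T, ∑ i : Fin N,
        ∫⁻ ω, Y i t ω ∂(Measure.pi fun _ : Fin (T + 1) => μ)
      ≤ ENNReal.ofReal (2 * (N : ℝ) * Real.log ((T : ℝ) + 1)) := by
  calc _ ≤ ∑ t ∈ Icc 1 T, ∑ _i : Fin N, ENNReal.ofReal (2 * ((t : ℝ) + 1)⁻¹) := by
        gcongr with t ht i
        rw [← ENNReal.two_div_natCast_add_one_eq_ofReal]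
        exact lintegral_le_of_ncard_val_lt_and_mem (hCm i) (by linarith [(mem_Icc.1 ht).2])
          (hcond i t ht)
    _ = ENNReal.ofReal (2 * N * ∑ t ∈ Icc 1 T, ((t : ℝ) + 1)⁻¹) := by
        rw [mul_sum, ENNReal.ofReal_sum_of_nonneg fun t _ => by positivity]
        refine sum_congr rfl fun t _ => ?_
        rw [sum_const, card_univ, Fintype.card_fin, nsmul_eq_mul, mul_comm 2 (N : ℝ), mul_assoc,
          ENNReal.ofReal_mul (Nat.cast_nonneg N), ENNReal.ofReal_natCast]
    _ ≤ ENNReal.ofReal (2 * (N : ℝ) * Real.log ((T : ℝ) + 1)) := by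
        gcongr
        exact sum_Icc_inv_add_one_le_log T

/-- Queries are i.i.d. with law μ on a space partitioned into cells C_1,...,C_N with
μ(C_i) > 0; n_i(t) is the number of the first t queries landing in C_i (so n_i(t) is binomial
with parameters t and μ(C_i)). If the quantities Y i t (representing μ(C_i \ Ĉ_{i,t}))
satisfy the conditional bound E[Y i t | n_i(t) = n] ≤ (2/(n+1))·μ(C_i), then
∑_{t=1}^T ∑_i E[Y i t] ≤ 2·N·log(T+1). -/
theorem stmt_18 {E : Type*} [MeasurableSpace E] (μ : Measure E) [IsProbabilityMeasure μ]
    (N T : ℕ) (C : Fin N → Set E) (hCm : ∀ i, MeasurableSet (C i))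
    (hdisj : Pairwise fun i j => Disjoint (C i) (C j)) (hcover : ⋃ i, C i = Set.univ)
    (hpos : ∀ i, 0 < μ (C i))
    (Y : Fin N → ℕ → (Fin (T + 1) → E) → ℝ≥0∞)
    (hcond : ∀ i : Fin N, ∀ t ∈ Finset.Icc 1 T, ∀ n : ℕ,
      ∫⁻ ω in {ω : Fin (T + 1) → E | {s : Fin (T + 1) | (s : ℕ) < t ∧ ω s ∈ C i}.ncard = n},
          Y i t ω ∂(Measure.pi fun _ : Fin (T + 1) => μ)
        ≤ (2 / ((n : ℝ≥0∞) + 1)) * μ (C i) *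
            (Measure.pi fun _ : Fin (T + 1) => μ)
              {ω : Fin (T + 1) → E | {s : Fin (T + 1) | (s : ℕ) < t ∧ ω s ∈ C i}.ncard = n}) :
    ∑ t ∈ Finset.Icc 1 T, ∑ i : Fin N,
        ∫⁻ ω, Y i t ω ∂(Measure.pi fun _ : Fin (T + 1) => μ)
      ≤ ENNReal.ofReal (2 * (N : ℝ) * Real.log ((T : ℝ) + 1)) :=
  stmt_18_general μ N T C hCm Y hcond
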